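/- arXiv:1110.3880 — 2 statements merged into one kernel-verified Lean document; each statement's English description precedes it below -/
import Mathlib

section
/- Let p₂ : E₂ → B be a Hurewicz fibration and E₁ ⊆ E₂ a subspace such that p₁ = p₂|_{E₁} : E₁ → B is a Hurewicz fibration and E₁ is a strong deformation retract of E₂ via a fiber-preserving retraction (i.e., there is H : E₂ × I → E₂ with H₀ = id, H(e,1) ∈ E₁, p₂(H(e,t)) = p₂(e) for all e, t, and H(e,t) = e for e ∈ E₁). Then the map q : Z → B × I, where Z = {(e, t) ∈ E₂ × I : t > 0, or (t = 0 and e ∈ E₁)} and q(e,t) = (p₂(e), t), is a Hurewicz fibration. -/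
open unitInterval Set

universe u v w

/-- A map `p : E → B` is a Hurewicz fibration if it is continuous and has the
homotopy lifting property with respect to every topological space. -/
def IsHurewiczFibration {E : Type u} {B : Type v} [TopologicalSpace E] [TopologicalSpace B]
    (p : E → B) : Prop :=
  Continuous p ∧
  ∀ (X : Type w) (_ : TopologicalSpace X) (h : C(X, E)) (H : C(X × I, B)),
    (∀ x, H (x, 0) = p (h x)) →
    ∃ L : C(X × I, E), (∀ x, L (x, 0) = h x) ∧ ∀ z, p (L z) = H z

/-!
Lift the `B`-component of a homotopy `G` through `p₂` to `L`, and let `t` be its `I`-component.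
The lift over `B × I` is `(x, s) ↦ (H (L (x, s), φ), t)` with `φ = 1 - t / s` clamped to `I`:
whenever `t = 0` the point has been pushed into `E₁` (for `s > 0`) or lay there already (`s = 0`).
The only discontinuities of `φ` are at `s = t = 0`, where `L` takes values in `E₁` on which `H` is
stationary, so the tube lemma still gives continuity of the lift.
-/

open Filter Topology

theorem continuousAt_comp_of_forall_eq {X Y K W : Type*} [TopologicalSpace X]
    [TopologicalSpace Y] [TopologicalSpace K] [TopologicalSpace W] [CompactSpace K]
    {H : Y × K → W} (hH : Continuous H) {f : X → Y} {g : X → K} {x : X}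
    (hf : ContinuousAt f x) {c : W} (hc : ∀ k, H (f x, k) = c) :
    ContinuousAt (fun x => H (f x, g x)) x := by
  rw [ContinuousAt, hc (g x)]
  intro V hV
  have hnear : ∀ᶠ y in 𝓝 (f x), ∀ k ∈ univ, H (y, k) ∈ V :=
    isCompact_univ.eventually_forall_of_forall_eventually fun k _ =>
      hH.continuousAt.preimage_mem_nhds (by rwa [hc k])
  exact (hf.eventually hnear).mono fun _ hx' => hx' _ trivial

theorem continuous_comp_of_continuousAt_or_forall_eq {X Y K W : Type*} [TopologicalSpace X]
    [TopologicalSpace Y] [TopologicalSpace K] [TopologicalSpace W] [CompactSpace K]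
    {H : Y × K → W} (hH : Continuous H) {f : X → Y} (hf : Continuous f) {g : X → K}
    (hg : ∀ x, ContinuousAt g x ∨ ∀ k, H (f x, k) = H (f x, g x)) :
    Continuous fun x => H (f x, g x) :=
  continuous_iff_continuousAt.2 fun x => (hg x).elim
    (fun hgx => hH.continuousAt.comp (hf.continuousAt.prodMk hgx))
    (continuousAt_comp_of_forall_eq hH hf.continuousAt)

/-- `1 - t / s` clamped to `I`; it vanishes at `s = 0` since `x / 0 = 0`. -/
noncomputable def retractionTime (s t : I) : I :=
  projIcc 0 1 zero_le_one (max ((s : ℝ) - t) 0 / s)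

@[simp]
theorem retractionTime_zero_left (t : I) : retractionTime 0 t = 0 := by
  simp [retractionTime]

theorem retractionTime_zero_right {s : I} (hs : s ≠ 0) : retractionTime s 0 = 1 := by
  simp [retractionTime, max_eq_left s.2.1, div_self (coe_ne_zero.2 hs)]

theorem continuousAt_retractionTime {s t : I} (h : s ≠ 0 ∨ t ≠ 0) :
    ContinuousAt (fun p : I × I => retractionTime p.1 p.2) (s, t) := by
  refine continuous_projIcc.continuousAt.comp ?_
  rcases eq_or_ne s 0 with rfl | hs
  · have ht : (0 : ℝ) < t := unitInterval.pos_iff_ne_zero.2 (h.resolve_left fun h => h rfl)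
    have hlt : ∀ᶠ p : I × I in 𝓝 (0, t), (p.1 : ℝ) < p.2 :=
      (isOpen_lt (by fun_prop) (by fun_prop)).mem_nhds (by simpa using ht)
    refine (continuousAt_const (y := (0 : ℝ))).congr ?_
    filter_upwards [hlt] with p hp
    simp [max_eq_right (sub_nonpos.2 hp.le)]
  · exact ContinuousAt.div (by fun_prop) (by fun_prop) (coe_ne_zero.2 hs)

theorem deformation_retractionTime_zero_mem {E : Type*} [TopologicalSpace E] {E₁ : Set E}
    {H : C(E × I, E)} (hH0 : ∀ e, H (e, 0) = e) (hH1 : ∀ e, H (e, 1) ∈ E₁) {e : E} {s : I}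
    (he : s = 0 → e ∈ E₁) : H (e, retractionTime s 0) ∈ E₁ := by
  rcases eq_or_ne s 0 with rfl | hs
  · simpa [hH0] using he rfl
  · simpa [retractionTime_zero_right hs] using hH1 e

theorem isHurewiczFibration_of_strongFiberDeformationRetract_general
    {E₂ : Type u} {B : Type v} [TopologicalSpace E₂] [TopologicalSpace B]
    (p₂ : E₂ → B) (hp₂ : IsHurewiczFibration.{u, v, u} p₂)
    (E₁ : Set E₂)
    (H : C(E₂ × I, E₂))
    (hH0 : ∀ e, H (e, 0) = e)
    (hH1 : ∀ e, H (e, 1) ∈ E₁)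
    (hHfib : ∀ e t, p₂ (H (e, t)) = p₂ e)
    (hHrel : ∀ e ∈ E₁, ∀ t, H (e, t) = e) :
    IsHurewiczFibration.{u, v, u}
      (fun z : { z : E₂ × I // 0 < z.2 ∨ (z.2 = 0 ∧ z.1 ∈ E₁) } =>
        ((p₂ z.1.1, z.1.2) : B × I)) := by
  obtain ⟨hp₂c, hp₂lift⟩ := hp₂
  refine ⟨by fun_prop, fun X _ h G hG0 => ?_⟩
  obtain ⟨L, hL0, hLp⟩ := hp₂lift X _ ⟨fun x => (h x).1.1, by fun_prop⟩
    ⟨fun z => (G z).1, by fun_prop⟩ fun x => congrArg Prod.fst (hG0 x)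
  have hLE₁ : ∀ z : X × I, z.2 = 0 → (G z).2 = 0 → L z ∈ E₁ := by
    rintro ⟨x, s⟩ rfl hGx
    have hhx : (h x).1.2 = 0 := (congrArg Prod.snd (hG0 x)).symm.trans hGx
    simpa [hL0] using ((h x).2.resolve_left (by simp [hhx])).2
  let ℓ : X × I → E₂ := fun z => H (L z, retractionTime z.2 (G z).2)
  have hℓ : Continuous ℓ := continuous_comp_of_continuousAt_or_forall_eq H.continuous
    L.continuous fun z => by
      by_cases hz : z.2 = 0 ∧ (G z).2 = 0
      · exact .inr fun k => by rw [hHrel _ (hLE₁ z hz.1 hz.2), hHrel _ (hLE₁ z hz.1 hz.2)]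
      · exact .inl ((continuousAt_retractionTime (not_and_or.1 hz)).comp
          (f := fun z : X × I => (z.2, (G z).2)) (by fun_prop))
  have hℓE₁ : ∀ z, 0 < (G z).2 ∨ ((G z).2 = 0 ∧ ℓ z ∈ E₁) := fun z => by
    rcases eq_or_ne (G z).2 0 with hGz | hGz
    · exact .inr ⟨hGz, by simpa only [ℓ, hGz] using
        deformation_retractionTime_zero_mem hH0 hH1 fun hz => hLE₁ z hz hGz⟩
    · exact .inl (unitInterval.pos_iff_ne_zero.2 hGz)
  refine ⟨⟨fun z => ⟨(ℓ z, (G z).2), hℓE₁ z⟩, by fun_prop⟩, fun x => ?_, fun z => ?_⟩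
  · exact Subtype.ext (Prod.ext (by simp [ℓ, hL0, hH0]) (congrArg Prod.snd (hG0 x) :))
  · exact Prod.ext ((hHfib _ _).trans (hLp z)) rfl

/-- Let `p₂ : E₂ → B` be a Hurewicz fibration and `E₁ ⊆ E₂` a subspace
such that `p₂|_{E₁}` is a Hurewicz fibration and `E₁` is a strong deformation retract of
`E₂` via a fiber preserving retraction `H`.  Then
`q : Z → B × I`, `q (e, t) = (p₂ e, t)`, where
`Z = {(e,t) ∈ E₂ × I : t > 0, or t = 0 and e ∈ E₁}`, is a Hurewicz fibration. -/
theorem isHurewiczFibration_of_strongFiberDeformationRetract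
    {E₂ : Type u} {B : Type v} [TopologicalSpace E₂] [TopologicalSpace B]
    (p₂ : E₂ → B) (hp₂ : IsHurewiczFibration.{u, v, u} p₂)
    (E₁ : Set E₂)
    (hp₁ : IsHurewiczFibration.{u, v, u} (fun e : E₁ => p₂ e))
    (H : C(E₂ × I, E₂))
    (hH0 : ∀ e, H (e, 0) = e)
    (hH1 : ∀ e, H (e, 1) ∈ E₁)
    (hHfib : ∀ e t, p₂ (H (e, t)) = p₂ e)
    (hHrel : ∀ e ∈ E₁, ∀ t, H (e, t) = e) :
    IsHurewiczFibration.{u, v, u}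
      (fun z : { z : E₂ × I // 0 < z.2 ∨ (z.2 = 0 ∧ z.1 ∈ E₁) } =>
        ((p₂ z.1.1, z.1.2) : B × I)) :=
  isHurewiczFibration_of_strongFiberDeformationRetract_general p₂ hp₂ E₁ H hH0 hH1 hHfib hHrel
end

section
/- Let p : E → B be a G-fibration with B^H path-connected for every isotropy subgroup H of B. Then for any isotropy subgroups H, K of B with H^a ≤ K for some a ∈ G, and any points b ∈ B^K, b' ∈ B^H, the fiber p^{-1}(b) — regarded as an H-space via h·e = (a^{-1}ha)e after translating by a — is H-homotopy equivalent to the H-space p^{-1}(b'). In particular, the family {p^{-1}(b_H)}_{H}, with b_H ∈ B^H chosen arbitrarily, is a compatible family. -/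
open unitInterval Set

universe u

/-- A `G`-space: a topological space with a `G`-action by homeomorphisms. -/
structure GSpace (G : Type u) [Group G] : Type (u + 1) where
  carrier : Type u
  [topology : TopologicalSpace carrier]
  [action : MulAction G carrier]
  continuous_smul : ∀ g : G, Continuous fun x : carrier => g • x

attribute [instance] GSpace.topology GSpace.action

variable {G : Type u} [Group G]

/-- An equivariant map of `G`-spaces. -/
def IsGMap {X Y : GSpace G} (f : X.carrier → Y.carrier) : Prop :=
  ∀ (g : G) (x : X.carrier), f (g • x) = g • f x

/-- A `G`-fibration: a continuous `G`-map with the `G`-homotopy lifting property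
with respect to every `G`-space. -/
def IsGFibration {E B : GSpace G} (p : E.carrier → B.carrier) : Prop :=
  Continuous p ∧ IsGMap (X := E) (Y := B) p ∧
  ∀ (X : GSpace G) (h : C(X.carrier, E.carrier)) (H : C(X.carrier × I, B.carrier)),
    IsGMap (X := X) (Y := E) h →
    (∀ (g : G) (x : X.carrier) (t : I), H (g • x, t) = g • H (x, t)) →
    (∀ x, H (x, 0) = p (h x)) →
    ∃ L : C(X.carrier × I, E.carrier),
      (∀ x, L (x, 0) = h x) ∧ (∀ z, p (L z) = H z) ∧
      (∀ (g : G) (x : X.carrier) (t : I), L (g • x, t) = g • L (x, t))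

/-- Two `G`-maps are `G`-homotopic if there is a homotopy between them which is
equivariant at each time. -/
def GHomotopic {Γ : Type u} [Group Γ] {X Y : GSpace Γ} (f₀ f₁ : C(X.carrier, Y.carrier)) : Prop :=
  ∃ K : C(X.carrier × I, Y.carrier),
    (∀ x, K (x, 0) = f₀ x) ∧ (∀ x, K (x, 1) = f₁ x) ∧
    (∀ (a : Γ) (x : X.carrier) (t : I), K (a • x, t) = a • K (x, t))

/-- `Γ`-homotopy equivalence of `Γ`-spaces. -/
def GHtpyEquiv {Γ : Type u} [Group Γ] (X Y : GSpace Γ) : Prop :=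
  ∃ (f : C(X.carrier, Y.carrier)) (g : C(Y.carrier, X.carrier)),
    IsGMap (X := X) (Y := Y) f ∧ IsGMap (X := Y) (Y := X) g ∧
    GHomotopic (X := X) (Y := X) (g.comp f) (ContinuousMap.id _) ∧
    GHomotopic (X := Y) (Y := Y) (f.comp g) (ContinuousMap.id _)

/-- Underlying space of the fiber `p⁻¹(b)`. -/
def FiberCarrier (E B : GSpace G) (p : E.carrier → B.carrier) (b : B.carrier) : Type u :=
  { e : E.carrier // p e = b }

instance (E B : GSpace G) (p : E.carrier → B.carrier) (b : B.carrier) :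
    TopologicalSpace (FiberCarrier E B p b) :=
  inferInstanceAs (TopologicalSpace { e : E.carrier // p e = b })

/-- The conjugated `H`-action `h • e = (a⁻¹ h a) • e` on the fiber `p⁻¹(b)`. -/
def conjSmul (E B : GSpace G) (p : E.carrier → B.carrier)
    (hp : IsGMap (X := E) (Y := B) p) (H K : Subgroup G) (a : G)
    (ha : ∀ h ∈ H, a⁻¹ * h * a ∈ K) (b : B.carrier) (hb : ∀ k ∈ K, k • b = b)
    (h : ↥H) (e : FiberCarrier E B p b) : FiberCarrier E B p b :=
  ⟨(a⁻¹ * ↑h * a) • e.1, by rw [hp, e.2, hb _ (ha ↑h h.2)]⟩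

/-- The fiber `p⁻¹(b)` over a point `b` fixed by the subgroup `K`, regarded as an
`H`-space via the conjugated action `h • e = (a⁻¹ h a) • e`, where `H^a ≤ K`.
(Taking `a = 1` and `K = H` gives the usual `H`-action on a fiber over `B^H`.) -/
def conjFiberGSpace (E B : GSpace G) (p : E.carrier → B.carrier)
    (hp : IsGMap (X := E) (Y := B) p) (H K : Subgroup G) (a : G)
    (ha : ∀ h ∈ H, a⁻¹ * h * a ∈ K) (b : B.carrier) (hb : ∀ k ∈ K, k • b = b) :
    GSpace ↥H where
  carrier := FiberCarrier E B p b
  action :=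
    { smul := conjSmul E B p hp H K a ha b hb
      one_smul := fun e => Subtype.ext (by
        show (a⁻¹ * ↑(1 : ↥H) * a) • e.1 = e.1
        simp)
      mul_smul := fun h₁ h₂ e => Subtype.ext (by
        show (a⁻¹ * ↑(h₁ * h₂) * a) • e.1 = (a⁻¹ * ↑h₁ * a) • (a⁻¹ * ↑h₂ * a) • e.1
        rw [← mul_smul]
        congr 1
        push_cast
        group) }
  continuous_smul h := Continuous.subtype_mk
    ((E.continuous_smul _).comp continuous_subtype_val) _

/-!
Restricting the `G`-fibration to `H` (through the induced spaces `G ×_H X`) makes `p` an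
`H`-fibration, and translation by `a` is an `H`-homeomorphism from `p⁻¹(b)` with the conjugated
action onto `p⁻¹(a • b)`, where `a • b ∈ B^H`. As `B^H` is path-connected, it remains to compare
the fibers over the ends of a path `ω` in `B^H`: lifting `ω` and its reverse gives `H`-maps
between them, and lifting the contraction of the loop `ω · ω⁻¹` shows that both composites are
`H`-homotopic to the identity.
-/

instance (X : GSpace G) : ContinuousConstSMul G X.carrier := ⟨X.continuous_smul⟩

section GHomotopy

variable {Γ : Type u} [Group Γ] {X Y Z : GSpace Γ}

theorem IsGMap.comp {f : X.carrier → Y.carrier} {g : Y.carrier → Z.carrier}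
    (hg : IsGMap (X := Y) (Y := Z) g) (hf : IsGMap (X := X) (Y := Y) f) :
    IsGMap (X := X) (Y := Z) (g ∘ f) := fun a x => by
  simp only [Function.comp_apply, hf a x, hg a (f x)]

theorem gHomotopic_iff_homotopicWith {f₀ f₁ : C(X.carrier, Y.carrier)} :
    GHomotopic f₀ f₁ ↔ f₀.HomotopicWith f₁ fun φ => IsGMap (X := X) (Y := Y) φ := by
  constructor
  · rintro ⟨K, hK₀, hK₁, hKeq⟩
    exact ⟨{ toFun := fun z => K (z.2, z.1)
             map_zero_left := hK₀
             map_one_left := hK₁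
             prop' := fun t a x => hKeq a x t }⟩
  · rintro ⟨F⟩
    exact ⟨⟨fun z => F (z.2, z.1), by fun_prop⟩, F.apply_zero, F.apply_one,
      fun a x t => F.prop t a x⟩

theorem GHomotopic.refl {f : C(X.carrier, Y.carrier)} (hf : IsGMap (X := X) (Y := Y) f) :
    GHomotopic f f :=
  gHomotopic_iff_homotopicWith.2 (.refl f hf)

theorem GHomotopic.symm {f₀ f₁ : C(X.carrier, Y.carrier)} (h : GHomotopic f₀ f₁) :
    GHomotopic f₁ f₀ :=
  gHomotopic_iff_homotopicWith.2 (gHomotopic_iff_homotopicWith.1 h).symm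

theorem GHomotopic.trans {f₀ f₁ f₂ : C(X.carrier, Y.carrier)} (h₀₁ : GHomotopic f₀ f₁)
    (h₁₂ : GHomotopic f₁ f₂) : GHomotopic f₀ f₂ :=
  gHomotopic_iff_homotopicWith.2
    ((gHomotopic_iff_homotopicWith.1 h₀₁).trans (gHomotopic_iff_homotopicWith.1 h₁₂))

theorem GHomotopic.comp_left {f₀ f₁ : C(X.carrier, Y.carrier)} {g : C(Y.carrier, Z.carrier)}
    (hg : IsGMap (X := Y) (Y := Z) g) (h : GHomotopic f₀ f₁) :
    GHomotopic (g.comp f₀) (g.comp f₁) := by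
  obtain ⟨K, hK₀, hK₁, hKeq⟩ := h
  exact ⟨g.comp K, fun x => congrArg g (hK₀ x), fun x => congrArg g (hK₁ x),
    fun a x t => by simp only [ContinuousMap.comp_apply, hKeq, hg a]⟩

theorem GHomotopic.comp_right {f₀ f₁ : C(Y.carrier, Z.carrier)} {g : C(X.carrier, Y.carrier)}
    (hg : IsGMap (X := X) (Y := Y) g) (h : GHomotopic f₀ f₁) :
    GHomotopic (f₀.comp g) (f₁.comp g) := by
  obtain ⟨K, hK₀, hK₁, hKeq⟩ := h
  exact ⟨K.comp (g.prodMap (.id I)), fun x => hK₀ (g x), fun x => hK₁ (g x),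
    fun a x t => by simp only [ContinuousMap.comp_apply, ContinuousMap.prodMap_apply,
      Prod.map, ContinuousMap.id_apply, hg a x, hKeq]⟩

theorem GHtpyEquiv.symm (h : GHtpyEquiv X Y) : GHtpyEquiv Y X :=
  let ⟨f, g, hf, hg, hgf, hfg⟩ := h
  ⟨g, f, hg, hf, hfg, hgf⟩

theorem GHtpyEquiv.trans (hXY : GHtpyEquiv X Y) (hYZ : GHtpyEquiv Y Z) : GHtpyEquiv X Z := by
  obtain ⟨f₁, g₁, hf₁, hg₁, hgf₁, hfg₁⟩ := hXY
  obtain ⟨f₂, g₂, hf₂, hg₂, hgf₂, hfg₂⟩ := hYZ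
  exact ⟨f₂.comp f₁, g₁.comp g₂, hf₂.comp hf₁, hg₁.comp hg₂,
    ((hgf₂.comp_right hf₁).comp_left hg₁).trans hgf₁,
    ((hfg₁.comp_right hg₂).comp_left hf₂).trans hfg₂⟩

theorem GHtpyEquiv.of_homeomorph (T : X.carrier ≃ₜ Y.carrier) (hT : IsGMap (X := X) (Y := Y) T) :
    GHtpyEquiv X Y := by
  have hT' : IsGMap (X := Y) (Y := X) T.symm := fun a y => by
    rw [T.symm_apply_eq, hT, T.apply_symm_apply]
  refine ⟨T, T.symm, hT, hT', ?_, ?_⟩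
  · simpa using GHomotopic.refl (X := X) (f := .id _) fun _ _ => rfl
  · simpa using GHomotopic.refl (X := Y) (f := .id _) fun _ _ => rfl

end GHomotopy

abbrev GSpace.restrict (X : GSpace G) (H : Subgroup G) : GSpace H where
  carrier := X.carrier
  continuous_smul h := X.continuous_smul h

theorem IsGMap.restrict {X Y : GSpace G} {f : X.carrier → Y.carrier}
    (hf : IsGMap (X := X) (Y := Y) f) (H : Subgroup G) :
    IsGMap (X := X.restrict H) (Y := Y.restrict H) f :=
  fun h x => hf h x

section Induced

variable (H : Subgroup G) (X : GSpace H)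

def inducedSetoid : Setoid (G × X.carrier) where
  r a b := ∃ h : H, b = (a.1 * h, h⁻¹ • a.2)
  iseqv := by
    refine ⟨fun a => ⟨1, by simp⟩, ?_, ?_⟩
    · rintro ⟨g, x⟩ _ ⟨h, rfl⟩
      exact ⟨h⁻¹, by simp⟩
    · rintro ⟨g, x⟩ _ _ ⟨h, rfl⟩ ⟨h', rfl⟩
      exact ⟨h * h', by simp [mul_assoc, mul_smul]⟩

variable [TopologicalSpace G] [DiscreteTopology G]

/-- The induced space `G ×_H X`, for `G` with the discrete topology. -/
def inducedGSpace : GSpace G where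
  carrier := Quotient (inducedSetoid H X)
  action :=
    { smul := fun g => Quotient.map' (fun a => (g * a.1, a.2)) (by
        rintro ⟨g', x⟩ _ ⟨h, rfl⟩
        exact ⟨h, by simp [mul_assoc]⟩)
      one_smul := fun q => Quotient.inductionOn q fun a => by
        simp [HSMul.hSMul, Quotient.map'_mk'']
      mul_smul := fun g g' q => Quotient.inductionOn q fun a => by
        simp [HSMul.hSMul, Quotient.map'_mk'', mul_assoc] }
  continuous_smul g := Continuous.quotient_map'
    ((continuous_const.mul continuous_fst).prodMk continuous_snd) _

variable {H X}

theorem isOpenMap_inducedMk :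
    IsOpenMap (Quotient.mk (inducedSetoid H X) : G × X.carrier → (inducedGSpace H X).carrier) := by
  intro U hU
  have hsat : Quotient.mk (inducedSetoid H X) ⁻¹' (Quotient.mk _ '' U) =
      ⋃ h : H, (fun a : G × X.carrier => (a.1 * (h : G)⁻¹, h • a.2)) ⁻¹' U := by
    ext ⟨g, x⟩
    simp only [mem_preimage, mem_image, mem_iUnion]
    constructor
    · rintro ⟨⟨g', x'⟩, hU', he⟩
      obtain ⟨h, he'⟩ := Quotient.exact he
      obtain ⟨rfl, rfl⟩ := Prod.mk.inj he'
      exact ⟨h, by simpa using hU'⟩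
    · rintro ⟨h, hmem⟩
      exact ⟨_, hmem, Quotient.sound ⟨h, by simp⟩⟩
  show IsOpen (Quotient.mk _ ⁻¹' (Quotient.mk _ '' U))
  rw [hsat]
  exact isOpen_iUnion fun h => hU.preimage
    ((continuous_fst.mul continuous_const).prodMk ((X.continuous_smul h).comp continuous_snd))

def inducedIncl : C(X.carrier, (inducedGSpace H X).carrier) :=
  ⟨fun x => Quotient.mk _ (1, x), continuous_quot_mk.comp (continuous_const.prodMk continuous_id)⟩

theorem inducedIncl_smul (h : H) (x : X.carrier) :
    inducedIncl (h • x) = (h : G) • inducedIncl x :=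
  Quotient.sound ⟨h, by simp⟩

variable {Y : GSpace G}

def inducedLift (f : C(X.carrier, Y.carrier)) (hf : IsGMap (X := X) (Y := Y.restrict H) f) :
    C((inducedGSpace H X).carrier, Y.carrier) where
  toFun := Quotient.lift (fun a => a.1 • f a.2) (by
    rintro ⟨g, x⟩ _ ⟨h, rfl⟩
    show g • f x = (g * h) • f (h⁻¹ • x)
    rw [hf, mul_smul]
    exact congrArg (g • ·) (smul_inv_smul (h : G) (f x)).symm)
  continuous_toFun := (continuous_prod_of_discrete_left.2 fun g =>
    (continuous_const_smul g).comp f.continuous).quotient_lift _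

theorem inducedLift_mk (f : C(X.carrier, Y.carrier)) (hf : IsGMap (X := X) (Y := Y.restrict H) f)
    (a : G × X.carrier) : inducedLift f hf (Quotient.mk _ a) = a.1 • f a.2 :=
  rfl

theorem isGMap_inducedLift (f : C(X.carrier, Y.carrier))
    (hf : IsGMap (X := X) (Y := Y.restrict H) f) :
    IsGMap (X := inducedGSpace H X) (Y := Y) (inducedLift f hf) :=
  fun g z => Quotient.inductionOn z fun a => mul_smul g a.1 (f a.2)

def inducedLiftProd (Φ : C(X.carrier × I, Y.carrier))
    (hΦ : ∀ (h : H) x t, Φ (h • x, t) = (h : G) • Φ (x, t)) :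
    C((inducedGSpace H X).carrier × I, Y.carrier) where
  toFun z := Quotient.lift (fun a => a.1 • Φ (a.2, z.2)) (by
    rintro ⟨g, x⟩ _ ⟨h, rfl⟩
    show g • Φ (x, z.2) = (g * h) • Φ (h⁻¹ • x, z.2)
    rw [hΦ, mul_smul]
    exact congrArg (g • ·) (smul_inv_smul (h : G) _).symm) z.1
  continuous_toFun := by
    have hq : Topology.IsQuotientMap (Prod.map (Quotient.mk (inducedSetoid H X)) (id : I → I)) :=
      (isOpenMap_inducedMk.prodMap IsOpenMap.id).isQuotientMap
        (continuous_quot_mk.prodMap continuous_id) (Quotient.mk_surjective.prodMap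
          Function.surjective_id)
    have hΦ' : Continuous fun w : G × (X.carrier × I) => w.1 • Φ w.2 :=
      continuous_prod_of_discrete_left.2 fun g => (continuous_const_smul g).comp Φ.continuous
    exact hq.continuous_iff.2 (hΦ'.comp (Homeomorph.prodAssoc G X.carrier I).continuous)

theorem inducedLiftProd_mk (Φ : C(X.carrier × I, Y.carrier))
    (hΦ : ∀ (h : H) x t, Φ (h • x, t) = (h : G) • Φ (x, t)) (a : G × X.carrier) (t : I) :
    inducedLiftProd Φ hΦ (Quotient.mk _ a, t) = a.1 • Φ (a.2, t) :=
  rfl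

theorem inducedLiftProd_smul (Φ : C(X.carrier × I, Y.carrier))
    (hΦ : ∀ (h : H) x t, Φ (h • x, t) = (h : G) • Φ (x, t)) (g : G)
    (z : (inducedGSpace H X).carrier) (t : I) :
    inducedLiftProd Φ hΦ (g • z, t) = g • inducedLiftProd Φ hΦ (z, t) :=
  Quotient.inductionOn z fun a => mul_smul g a.1 (Φ (a.2, t))

end Induced

/-- Lift over `G ×_H X` and restrict back along `x ↦ [1, x]`. -/
theorem IsGFibration.restrict {E B : GSpace G} {p : E.carrier → B.carrier}
    (hp : IsGFibration (E := E) (B := B) p) (H : Subgroup G) :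
    IsGFibration (E := E.restrict H) (B := B.restrict H) p := by
  refine ⟨hp.1, hp.2.1.restrict H, fun X h Φ hh hΦ h₀ => ?_⟩
  let _ : TopologicalSpace G := ⊥
  have : DiscreteTopology G := ⟨rfl⟩
  obtain ⟨L, hL₀, hLp, hLeq⟩ := hp.2.2 (inducedGSpace H X) (inducedLift (Y := E) h hh)
    (inducedLiftProd (Y := B) Φ fun τ x t => hΦ τ x t) (isGMap_inducedLift _ _)
    (inducedLiftProd_smul _ _) fun z => Quotient.inductionOn z fun a => by
      rw [inducedLiftProd_mk, inducedLift_mk, h₀, hp.2.1]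
  refine ⟨L.comp (inducedIncl.prodMap (.id I)), fun x => ?_, fun z => ?_, fun τ x t => ?_⟩
  · exact (hL₀ _).trans (one_smul G (h x))
  · exact (hLp _).trans (one_smul G (Φ z))
  · show L (inducedIncl (τ • x), t) = (τ : G) • L (inducedIncl x, t)
    rw [inducedIncl_smul, hLeq]

theorem ContinuousMap.Homotopy.comp_trans_eq_path_trans {X Y Z : Type*} [TopologicalSpace X]
    [TopologicalSpace Y] [TopologicalSpace Z] {f₀ f₁ f₂ : C(X, Y)} (A : Homotopy f₀ f₁)
    (B : Homotopy f₁ f₂) (π : Y → Z) {z₀ z₁ z₂ : Z} {γ₁ : Path z₀ z₁} {γ₂ : Path z₁ z₂}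
    (hA : ∀ t x, π (A (t, x)) = γ₁ t) (hB : ∀ t x, π (B (t, x)) = γ₂ t) (t : I) (x : X) :
    π (A.trans B (t, x)) = γ₁.trans γ₂ t := by
  rw [Homotopy.trans_apply, Path.trans_apply]
  split_ifs
  · exact hA _ x
  · exact hB _ x

def GSpace.prodI (X : GSpace G) : GSpace G where
  carrier := X.carrier × I
  action :=
    { smul g z := (g • z.1, z.2)
      one_smul z := Prod.ext (one_smul G z.1) rfl
      mul_smul g g' z := Prod.ext (mul_smul g g' z.1) rfl }
  continuous_smul g := ((X.continuous_smul g).comp continuous_fst).prodMk continuous_snd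

section Fiber

variable {E B : GSpace G} {p : E.carrier → B.carrier}

def fiberGSpace (hp : IsGMap (X := E) (Y := B) p) (b : B.carrier) (hb : ∀ g : G, g • b = b) :
    GSpace G where
  carrier := FiberCarrier E B p b
  action :=
    { smul g e := ⟨g • e.1, (hp g e.1).trans ((congrArg (g • ·) e.2).trans (hb g))⟩
      one_smul e := Subtype.ext (one_smul G e.1)
      mul_smul g g' e := Subtype.ext (mul_smul g g' e.1) }
  continuous_smul g := ((continuous_const_smul g).comp continuous_subtype_val).subtype_mk _

variable (hp : IsGMap (X := E) (Y := B) p) {b : B.carrier} (hb : ∀ g : G, g • b = b)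

def fiberIncl : C((fiberGSpace hp b hb).carrier, E.carrier) :=
  ⟨Subtype.val, continuous_subtype_val⟩

def fiberCodRestrict {Z : Type*} [TopologicalSpace Z] (φ : C(Z, E.carrier))
    (hφ : ∀ z, p (φ z) = b) : C(Z, (fiberGSpace hp b hb).carrier) :=
  ⟨fun z => ⟨φ z, hφ z⟩, φ.continuous.subtype_mk _⟩

variable {hp hb}

theorem gHomotopic_of_homotopy_in_fiber {X : GSpace G}
    {f₀ f₁ : C(X.carrier, (fiberGSpace hp b hb).carrier)} (K : X.carrier × I → E.carrier)
    (hK : Continuous K) (hKp : ∀ z, p (K z) = b) (hKeq : ∀ (g : G) x t, K (g • x, t) = g • K (x, t))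
    (h₀ : ∀ x, K (x, 0) = (f₀ x).1) (h₁ : ∀ x, K (x, 1) = (f₁ x).1) : GHomotopic f₀ f₁ :=
  ⟨fiberCodRestrict hp hb ⟨K, hK⟩ hKp, fun x => Subtype.ext (h₀ x), fun x => Subtype.ext (h₁ x),
    fun g x t => Subtype.ext (hKeq g x t)⟩

end Fiber

section Transport

variable {E B : GSpace G} {p : E.carrier → B.carrier} (hp : IsGFibration (E := E) (B := B) p)
/-- Lifting a null-homotopy of the loop `γ` (with `M` as initial lift) produces a lift of
the whole square; its three edges over `b` join `f₀` to `f₁` inside the fiber. -/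
theorem IsGFibration.gHomotopic_of_homotopyWith_over_loop {b : B.carrier}
    {hb : ∀ g : G, g • b = b} {X : GSpace G}
    {f₀ f₁ : C(X.carrier, (fiberGSpace hp.2.1 b hb).carrier)}
    (M : ((fiberIncl hp.2.1 hb).comp f₀).HomotopyWith ((fiberIncl hp.2.1 hb).comp f₁)
      fun φ => IsGMap (X := X) (Y := E) φ)
    {γ : Path b b} (hM : ∀ t x, p (M (t, x)) = γ t)
    (F : Path.Homotopy γ (Path.refl b)) (hF : ∀ z (g : G), g • F z = F z) :
    GHomotopic f₀ f₁ := by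
  obtain ⟨R, hR₀, hRp, hReq⟩ := hp.2.2 X.prodI ⟨fun z => M (z.2, z.1), by fun_prop⟩
    ⟨fun z => F (z.2, z.1.2), by fun_prop⟩ (fun g z => M.prop z.2 g z.1)
    (fun g z t => (hF _ g).symm) (fun z => (F.apply_zero z.2).trans (hM z.2 z.1).symm)
  have hR : ∀ x t s, p (R ((x, t), s)) = F (s, t) := fun x t s => hRp ((x, t), s)
  let corner (t : I) : C(X.carrier, (fiberGSpace hp.2.1 b hb).carrier) :=
    fiberCodRestrict hp.2.1 hb (R.comp ⟨fun x => ((x, t), 1), by fun_prop⟩)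
      fun x => (hR x t 1).trans (F.apply_one t)
  have edge₀ : GHomotopic f₀ (corner 0) :=
    gHomotopic_of_homotopy_in_fiber (fun z => R ((z.1, 0), z.2)) (by fun_prop)
      (fun z => (hR _ _ _).trans (F.source _)) (fun g x t => hReq g (x, 0) t)
      (fun x => (hR₀ _).trans (M.apply_zero x)) fun _ => rfl
  have edge₁ : GHomotopic f₁ (corner 1) :=
    gHomotopic_of_homotopy_in_fiber (fun z => R ((z.1, 1), z.2)) (by fun_prop)
      (fun z => (hR _ _ _).trans (F.target _)) (fun g x t => hReq g (x, 1) t)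
      (fun x => (hR₀ _).trans (M.apply_one x)) fun _ => rfl
  have top : GHomotopic (corner 0) (corner 1) :=
    gHomotopic_of_homotopy_in_fiber (fun z => R (z, 1)) (by fun_prop)
      (fun z => (hR _ _ _).trans (F.apply_one _)) (fun g x t => hReq g (x, t) 1)
      (fun _ => rfl) fun _ => rfl
  exact edge₀.trans (top.trans edge₁.symm)

theorem IsGFibration.exists_fiberTransport {b₁ b₂ : B.carrier} (hb₁ : ∀ g : G, g • b₁ = b₁)
    (hb₂ : ∀ g : G, g • b₂ = b₂) (ω : Path b₁ b₂) (hω : ∀ t (g : G), g • ω t = ω t) :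
    ∃ f : C((fiberGSpace hp.2.1 b₁ hb₁).carrier, (fiberGSpace hp.2.1 b₂ hb₂).carrier),
      IsGMap (X := fiberGSpace hp.2.1 b₁ hb₁) (Y := fiberGSpace hp.2.1 b₂ hb₂) f ∧
      ∃ L : (fiberIncl hp.2.1 hb₁).HomotopyWith ((fiberIncl hp.2.1 hb₂).comp f)
        (fun φ => IsGMap (X := fiberGSpace hp.2.1 b₁ hb₁) (Y := E) φ),
        ∀ t e, p (L (t, e)) = ω t := by
  obtain ⟨L, hL₀, hLp, hLeq⟩ := hp.2.2 (fiberGSpace hp.2.1 b₁ hb₁) (fiberIncl hp.2.1 hb₁)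
    ⟨fun z => ω z.2, by fun_prop⟩ (fun _ _ => rfl) (fun g _ t => (hω t g).symm)
    fun e => ω.source.trans e.2.symm
  refine ⟨fiberCodRestrict hp.2.1 hb₂ (L.comp ⟨fun e => (e, 1), by fun_prop⟩)
    (fun e => (hLp (e, 1)).trans ω.target), fun g e => Subtype.ext (hLeq g e 1),
    { toFun := fun z => L (z.2, z.1)
      map_zero_left := hL₀
      map_one_left := fun _ => rfl
      prop' := fun t g e => hLeq g e t }, fun t e => hLp (e, t)⟩

/-- The concatenated lift lies over the loop `ω.trans ω.symm`, which contracts inside `B^G`. -/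
theorem IsGFibration.gHomotopic_transport_symm_comp_id {b₁ b₂ : B.carrier}
    {hb₁ : ∀ g : G, g • b₁ = b₁} {hb₂ : ∀ g : G, g • b₂ = b₂} {ω : Path b₁ b₂}
    (hω : ∀ t (g : G), g • ω t = ω t)
    {f : C((fiberGSpace hp.2.1 b₁ hb₁).carrier, (fiberGSpace hp.2.1 b₂ hb₂).carrier)}
    {g : C((fiberGSpace hp.2.1 b₂ hb₂).carrier, (fiberGSpace hp.2.1 b₁ hb₁).carrier)}
    (hf : IsGMap (X := fiberGSpace hp.2.1 b₁ hb₁) (Y := fiberGSpace hp.2.1 b₂ hb₂) f)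
    (L : (fiberIncl hp.2.1 hb₁).HomotopyWith ((fiberIncl hp.2.1 hb₂).comp f)
      (fun φ => IsGMap (X := fiberGSpace hp.2.1 b₁ hb₁) (Y := E) φ))
    (hL : ∀ t e, p (L (t, e)) = ω t)
    (L' : (fiberIncl hp.2.1 hb₂).HomotopyWith ((fiberIncl hp.2.1 hb₁).comp g)
      (fun φ => IsGMap (X := fiberGSpace hp.2.1 b₂ hb₂) (Y := E) φ))
    (hL' : ∀ t e, p (L' (t, e)) = ω.symm t) :
    GHomotopic (g.comp f) (.id _) := by
  let L'f : ((fiberIncl hp.2.1 hb₂).comp f).HomotopyWith (((fiberIncl hp.2.1 hb₁).comp g).comp f)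
      (fun φ => IsGMap (X := fiberGSpace hp.2.1 b₁ hb₁) (Y := E) φ) :=
    ⟨L'.toHomotopy.compContinuousMap f, fun t => (L'.prop t).comp hf⟩
  exact (hp.gHomotopic_of_homotopyWith_over_loop (f₀ := .id _) (f₁ := g.comp f) (L.trans L'f)
    (γ := ω.trans ω.symm)
    (L.toHomotopy.comp_trans_eq_path_trans L'f.toHomotopy p hL fun t e => hL' t (f e))
    (Path.Homotopy.reflTransSymm ω).symm fun z g => hω _ g).symm

theorem IsGFibration.gHtpyEquiv_fiber_of_path {b₁ b₂ : B.carrier} (hb₁ : ∀ g : G, g • b₁ = b₁)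
    (hb₂ : ∀ g : G, g • b₂ = b₂) (ω : Path b₁ b₂) (hω : ∀ t (g : G), g • ω t = ω t) :
    GHtpyEquiv (fiberGSpace hp.2.1 b₁ hb₁) (fiberGSpace hp.2.1 b₂ hb₂) := by
  obtain ⟨f, hf, L, hL⟩ := hp.exists_fiberTransport hb₁ hb₂ ω hω
  obtain ⟨g, hg, L', hL'⟩ := hp.exists_fiberTransport hb₂ hb₁ ω.symm fun t => hω (σ t)
  refine ⟨f, g, hf, hg, hp.gHomotopic_transport_symm_comp_id hω hf L hL L' hL', ?_⟩
  rw [← ω.symm_symm] at hL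
  exact hp.gHomotopic_transport_symm_comp_id (fun t => hω (σ t)) hg L' hL' L hL

end Transport

theorem smul_fixed_of_conj_mem {α : Type*} [MulAction G α] {H K : Subgroup G} {a : G}
    (ha : ∀ h ∈ H, a⁻¹ * h * a ∈ K) {b : α} (hb : ∀ k ∈ K, k • b = b) :
    ∀ h ∈ H, h • a • b = a • b := fun h hh =>
  calc h • a • b = a • (a⁻¹ * h * a) • b := by rw [smul_smul, smul_smul]; group
    _ = a • b := by rw [hb _ (ha h hh)]

theorem conjFiberGSpace_gHtpyEquiv_fiberGSpace {E B : GSpace G} {p : E.carrier → B.carrier}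
    (hp : IsGMap (X := E) (Y := B) p) (H K : Subgroup G) (a : G)
    (ha : ∀ h ∈ H, a⁻¹ * h * a ∈ K) (b : B.carrier) (hb : ∀ k ∈ K, k • b = b) {c : B.carrier}
    (hc : a • b = c) (hc' : ∀ h : H, h • c = c) :
    GHtpyEquiv (conjFiberGSpace E B p hp H K a ha b hb) (fiberGSpace (hp.restrict H) c hc') := by
  refine .of_homeomorph ((Homeomorph.smul a).subtype fun e => ?_) fun h e => Subtype.ext ?_
  · rw [← hc, Homeomorph.smul_apply, hp, smul_left_cancel_iff]
  · show a • (a⁻¹ * h * a) • e.1 = (h : G) • a • e.1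
    rw [smul_smul, smul_smul]
    group

/-- Let `p : E → B` be a `G`-fibration of a finite group `G` with
`B^H` path-connected for every isotropy subgroup `H` of `B`.  Then for isotropy
subgroups `H, K` with `H^a ≤ K` and points `b ∈ B^K`, `b' ∈ B^H`, the fiber
`p⁻¹(b)` with the conjugated `H`-action is `H`-homotopy equivalent to the fiber
`p⁻¹(b')` with its natural `H`-action.  (In particular, choosing base points in each
`B^H` yields a compatible family of fibers.) -/
theorem conjFiber_gHtpyEquiv_fiber (E B : GSpace G)
    (p : E.carrier → B.carrier) (hp : IsGFibration (E := E) (B := B) p)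
    (hconn : ∀ H : Subgroup G, (∃ x : B.carrier, MulAction.stabilizer G x = H) →
      IsPathConnected { b : B.carrier | ∀ h ∈ H, h • b = b })
    (H K : Subgroup G)
    (hH : ∃ x : B.carrier, MulAction.stabilizer G x = H)
    (a : G) (ha : ∀ h ∈ H, a⁻¹ * h * a ∈ K)
    (b : B.carrier) (hb : ∀ k ∈ K, k • b = b)
    (b' : B.carrier) (hb' : ∀ h ∈ H, h • b' = b') :
    GHtpyEquiv (conjFiberGSpace E B p hp.2.1 H K a ha b hb)
      (conjFiberGSpace E B p hp.2.1 H H 1 (fun h hh => by simpa using hh) b' hb') := by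
  have hab := smul_fixed_of_conj_mem ha hb
  obtain ⟨ω, hω⟩ := (hconn H hH).joinedIn _ hab _ hb'
  have transport := (hp.restrict H).gHtpyEquiv_fiber_of_path (fun h => hab h h.2)
    (fun h => hb' h h.2) ω fun t h => hω t h h.2
  exact (conjFiberGSpace_gHtpyEquiv_fiberGSpace hp.2.1 H K a ha b hb rfl _).trans <|
    transport.trans
      (conjFiberGSpace_gHtpyEquiv_fiberGSpace hp.2.1 H H 1 _ b' hb' (one_smul G b') _).symm
end
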